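/- arXiv:0801.1221 — 4 statements merged into one kernel-verified Lean document; each statement's English description precedes it below -/
import Mathlib

section
/- Let ρ ∈ (0, 1/2) and set p_0 = 1 - ρ. Let a be a real random variable for which there exist real numbers x^- < x^+ with P(a > x^+) > ρ and P(a < x^-) > ρ. Then there exist a parameter p ∈ (1 - p_0, p_0), a measurable function f : (0,1) → ℝ, and a measurable function δ : (0,1) → (0, +∞) such that, if w is uniformly distributed on (0,1), ε is a Bernoulli random variable with P(ε = 1) = p and P(ε = 0) = 1 - p, and w and ε are independent, then the random variable f(w) + δ(w)·ε has the same distribution as a. -/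
/-!
Split the law `μ` of `a` at `xm`: `μ = μ (Iio xm) • μ[|Iio xm] + μ (Ici xm) • μ[|Ici xm]`, and
both weights exceed `ρ`. Each conditional law is the image of the uniform law on `(0,1)` under a
measurable map, `f` with values `< xm` and `g` with values `≥ xm`, so `δ = g - f > 0`. Since
`f (w) + δ (w) ε` is `f (w)` or `g (w)` according as `ε = 0` or `ε = 1`, independence makes its law
the same mixture, with `p = μ (Ici xm)`.
-/

open MeasureTheory ProbabilityTheory Set

theorem map_projIcc_volume_restrict_Ioo :
    (volume.restrict (Ioo (0 : ℝ) 1)).map (projIcc 0 1 zero_le_one) =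
      (volume : Measure unitInterval) := by
  rw [Measure.restrict_congr_set Ioo_ae_eq_Icc, ← unitInterval.measurePreserving_coe.map_eq,
    Measure.map_map continuous_projIcc.measurable measurable_subtype_coe]
  simp [Function.comp_def, projIcc_val]

section Representation

variable {Y : Type*} [MeasurableSpace Y] [StandardBorelSpace Y]

theorem exists_measurable_map_volume_restrict_Ioo_eq [Nonempty Y]
    (ν : Measure Y) [IsProbabilityMeasure ν] :
    ∃ f : ℝ → Y, Measurable f ∧ (volume.restrict (Ioo (0 : ℝ) 1)).map f = ν := by
  obtain ⟨f, hf, hfν⟩ := ν.exists_measurable_map_eq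
  refine ⟨f ∘ projIcc 0 1 zero_le_one, hf.comp continuous_projIcc.measurable, ?_⟩
  rw [← Measure.map_map hf continuous_projIcc.measurable, map_projIcc_volume_restrict_Ioo, hfν]

theorem exists_measurable_map_volume_restrict_Ioo_eq_of_ae_mem
    {ν : Measure Y} [IsProbabilityMeasure ν] {s : Set Y} (hs : MeasurableSet s)
    (hνs : ∀ᵐ y ∂ν, y ∈ s) :
    ∃ f : ℝ → Y, Measurable f ∧ (∀ t, f t ∈ s) ∧
      (volume.restrict (Ioo (0 : ℝ) 1)).map f = ν := by
  classical
  obtain ⟨y₀, hy₀⟩ := hνs.exists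
  have : Nonempty Y := ⟨y₀⟩
  obtain ⟨f, hf, hfν⟩ := exists_measurable_map_volume_restrict_Ioo_eq ν
  have hfs : ∀ᵐ t ∂volume.restrict (Ioo (0 : ℝ) 1), f t ∈ s :=
    ae_of_ae_map hf.aemeasurable (hfν ▸ hνs)
  refine ⟨fun t => if f t ∈ s then f t else y₀, hf.ite (hf hs) measurable_const,
    fun t => ?_, ?_⟩
  · by_cases h : f t ∈ s <;> simp [h, hy₀]
  · rw [← hfν]
    refine Measure.map_congr ?_
    filter_upwards [hfs] with t ht
    simp [ht]

theorem exists_measurable_map_volume_restrict_Ioo_eq_cond (μ : Measure Y) [IsFiniteMeasure μ]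
    {s : Set Y} (hs : MeasurableSet s) (hμs : μ s ≠ 0) :
    ∃ f : ℝ → Y, Measurable f ∧ (∀ t, f t ∈ s) ∧
      (volume.restrict (Ioo (0 : ℝ) 1)).map f = μ[|s] :=
  have := cond_isProbabilityMeasure hμs
  exists_measurable_map_volume_restrict_Ioo_eq_of_ae_mem hs (ae_cond_mem hs)

end Representation

theorem smul_cond_add_smul_cond_compl {Ω : Type*} [MeasurableSpace Ω] (μ : Measure Ω)
    [IsFiniteMeasure μ] {s : Set Ω} (hs : MeasurableSet s) :
    μ s • μ[|s] + μ sᶜ • μ[|sᶜ] = μ := by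
  ext t ht
  simp only [Measure.add_apply, Measure.smul_apply, smul_eq_mul]
  rw [mul_comm, mul_comm (μ sᶜ), cond_add_cond_compl_eq hs]

section Mixture

variable {Ω α : Type*} [MeasurableSpace Ω] [MeasurableSpace α] {P : Measure Ω} {ε : Ω → ℝ}

theorem ae_eq_zero_or_eq_one_of_measure_add_eq_one [IsProbabilityMeasure P] (hε : Measurable ε)
    (h : P (ε ⁻¹' {0}) + P (ε ⁻¹' {1}) = 1) : ∀ᵐ ω ∂P, ε ω = 0 ∨ ε ω = 1 := by
  have hE : MeasurableSet (ε ⁻¹' {0} ∪ ε ⁻¹' {1}) :=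
    (hε (measurableSet_singleton 0)).union (hε (measurableSet_singleton 1))
  refine mem_ae_iff.2 ((prob_compl_eq_zero_iff hE).2 ?_)
  rwa [measure_union ((disjoint_singleton.2 zero_ne_one).preimage ε)
    (hε (measurableSet_singleton 1))]

theorem map_add_mul_eq_smul_add_smul_of_indepFun {w : Ω → α} (hw : Measurable w)
    (hε : Measurable ε) (hind : IndepFun w ε P) (hε01 : ∀ᵐ ω ∂P, ε ω = 0 ∨ ε ω = 1)
    {f δ : α → ℝ} (hf : Measurable f) (hδ : Measurable δ) :
    P.map (fun ω => f (w ω) + δ (w ω) * ε ω) =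
      P (ε ⁻¹' {0}) • (P.map w).map f + P (ε ⁻¹' {1}) • (P.map w).map (f + δ) := by
  ext S hS
  have hfδ : Measurable (f + δ) := hf.add hδ
  have hsplit : (fun ω => f (w ω) + δ (w ω) * ε ω) ⁻¹' S =ᵐ[P]
      ((w ⁻¹' (f ⁻¹' S) ∩ ε ⁻¹' {0}) ∪ (w ⁻¹' ((f + δ) ⁻¹' S) ∩ ε ⁻¹' {1}) : Set Ω) := by
    refine Filter.eventuallyEq_set.2 ?_
    filter_upwards [hε01] with ω hω
    rcases hω with h | h <;> simp [h]
  have hdisj : Disjoint (w ⁻¹' (f ⁻¹' S) ∩ ε ⁻¹' {0}) (w ⁻¹' ((f + δ) ⁻¹' S) ∩ ε ⁻¹' {1}) :=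
    .inter_right' _ (.inter_left' _ ((disjoint_singleton.2 zero_ne_one).preimage ε))
  rw [Measure.map_apply (by fun_prop) hS, measure_congr hsplit,
    measure_union hdisj ((hw (hfδ hS)).inter (hε (measurableSet_singleton 1))),
    hind.measure_inter_preimage_eq_mul _ _ (hf hS) (measurableSet_singleton 0),
    hind.measure_inter_preimage_eq_mul _ _ (hfδ hS) (measurableSet_singleton 1),
    Measure.add_apply, Measure.smul_apply, Measure.smul_apply,
    Measure.map_apply hf hS, Measure.map_apply hfδ hS, Measure.map_apply hw (hf hS),
    Measure.map_apply hw (hfδ hS), smul_eq_mul, smul_eq_mul, mul_comm, mul_comm (P (ε ⁻¹' {1}))]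

end Mixture

/-- **Bernoulli decomposition of a non-degenerate random variable.**
If `a` is a real random variable with `P(a > x⁺) > ρ` and `P(a < x⁻) > ρ` for some
`x⁻ < x⁺` and `ρ ∈ (0, 1/2)`, then with `p₀ = 1 - ρ` there exist `p ∈ (1 - p₀, p₀)`
and measurable functions `f : (0,1) → ℝ`, `δ : (0,1) → (0,∞)` such that whenever `w`
is uniform on `(0,1)`, `ε` is Bernoulli with parameter `p` and `w, ε` are independent,
the random variable `f(w) + δ(w)·ε` has the same law as `a`. -/
theorem bernoulli_decomposition (ρ : ℝ) (hρ : ρ ∈ Set.Ioo (0 : ℝ) (1 / 2))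
    (p₀ : ℝ) (hp₀ : p₀ = 1 - ρ)
    (Ω : Type) [MeasureSpace Ω] [IsProbabilityMeasure (ℙ : Measure Ω)]
    (a : Ω → ℝ) (ha : Measurable a)
    (xm xp : ℝ) (hx : xm < xp)
    (hxp : ρ < (ℙ {ω | xp < a ω}).toReal) (hxm : ρ < (ℙ {ω | a ω < xm}).toReal) :
    ∃ (p : ℝ) (f δ : ℝ → ℝ),
      p ∈ Set.Ioo (1 - p₀) p₀ ∧
      Measurable f ∧ Measurable δ ∧ (∀ t ∈ Set.Ioo (0 : ℝ) 1, 0 < δ t) ∧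
      ∀ (Ω' : Type) (_ : MeasureSpace Ω') (_ : IsProbabilityMeasure (ℙ : Measure Ω'))
        (w ε : Ω' → ℝ), Measurable w → Measurable ε →
        Measure.map w ℙ = volume.restrict (Set.Ioo (0 : ℝ) 1) →
        (ℙ {ω' | ε ω' = 1} = ENNReal.ofReal p ∧ ℙ {ω' | ε ω' = 0} = ENNReal.ofReal (1 - p)) →
        IndepFun w ε ℙ →
        Measure.map (fun ω' => f (w ω') + δ (w ω') * ε ω') ℙ = Measure.map a ℙ := by
  set μ : Measure ℝ := (ℙ : Measure Ω).map a
  have : IsProbabilityMeasure μ := Measure.isProbabilityMeasure_map ha.aemeasurable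
  have hμ_lt : ρ < μ.real (Iio xm) := by rwa [map_measureReal_apply ha measurableSet_Iio]
  have hμ_ge : ρ < μ.real (Ici xm) := by
    rw [map_measureReal_apply ha measurableSet_Ici]
    exact hxp.trans_le (measureReal_mono fun ω (h : xp < a ω) => (hx.trans h).le)
  have hμ_Iio : μ.real (Iio xm) = 1 - μ.real (Ici xm) := by
    rw [← compl_Ici, probReal_compl_eq_one_sub measurableSet_Ici]
  obtain ⟨f, hf, hf_lt, hf_map⟩ := exists_measurable_map_volume_restrict_Ioo_eq_cond μ
    (measurableSet_Iio (a := xm)) ((measureReal_ne_zero_iff).1 (hρ.1.trans hμ_lt).ne')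
  obtain ⟨g, hg, hg_ge, hg_map⟩ := exists_measurable_map_volume_restrict_Ioo_eq_cond μ
    (measurableSet_Ici (a := xm)) ((measureReal_ne_zero_iff).1 (hρ.1.trans hμ_ge).ne')
  refine ⟨μ.real (Ici xm), f, g - f, ?_, hf, hg.sub hf,
    fun t _ => sub_pos.2 ((hf_lt t).trans_le (hg_ge t)), ?_⟩
  · rw [hp₀, sub_sub_cancel]
    constructor <;> linarith
  rintro Ω' _ _ w ε hw hε hw_map ⟨hε1, hε0⟩ hind
  have hε0' : ℙ (ε ⁻¹' {0}) = μ (Iio xm) := by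
    rwa [← ofReal_measureReal (μ := μ), hμ_Iio]
  have hε1' : ℙ (ε ⁻¹' {1}) = μ (Ici xm) := hε1.trans ofReal_measureReal
  have hε01 : ∀ᵐ ω ∂ℙ, ε ω = 0 ∨ ε ω = 1 := ae_eq_zero_or_eq_one_of_measure_add_eq_one hε <| by
    rw [hε0', hε1', ← compl_Iio, measure_add_measure_compl measurableSet_Iio, measure_univ]
  rw [map_add_mul_eq_smul_add_smul_of_indepFun hw hε hind hε01 hf (hg.sub hf), add_sub_cancel,
    hw_map, hf_map, hg_map, hε0', hε1', ← compl_Iio,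
    smul_cond_add_smul_cond_compl μ measurableSet_Iio]
end

section
/- Let p_0 ∈ (1/2, 1). There exists a constant C > 0 (depending only on p_0) such that: for every s ≥ 1, every choice of nonzero real numbers α_1, …, α_s, every real number b, and every family ε_1, …, ε_s of independent Bernoulli random variables with parameters p_1, …, p_s all lying in the interval (1 - p_0, p_0), one has P(α_1 ε_1 + ⋯ + α_s ε_s = b) ≤ C / √s. -/
/-!
Put `δ = 1 - p₀` and write `p i = δ + c i`, `1 - p i = δ + c' i` with `c i, c' i ≥ 0`. Expanding
`∏ (δ + ·)` exhibits the Bernoulli vector as a mixture over the set `T` of coordinates that are fair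
coins (each value with weight `δ`), the other coordinates being drawn with weights `c`, `c'`. Once
those are fixed, an antichain meets the cube over `T` in at most `C(|T|, ⌊|T|/2⌋) ≤ 2^|T| / √(|T|+1)`
points (Sperner), and `|T|` is binomial with parameters `s` and `2δ`, for which
`E[1/√(|T|+1)] ≤ 1/√(2δ(s+1))` by Cauchy–Schwarz. Flipping the coordinates with `α i < 0` makes
all coefficients positive, and the level set `{S | ∑ i ∈ S, α i = b}` of positive coefficients is
an antichain.
-/

open Finset MeasureTheory ProbabilityTheory

namespace Nat

theorem centralBinom_sq_mul_le (n : ℕ) : n.centralBinom ^ 2 * (2 * n + 1) ≤ 16 ^ n := by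
  induction n with
  | zero => simp
  | succ n ih =>
    have hpoly : 4 * (2 * n + 1) * (2 * n + 3) ≤ 16 * (n + 1) ^ 2 := by nlinarith
    refine Nat.le_of_mul_le_mul_right (c := (n + 1) ^ 2) ?_ (by positivity)
    calc (n + 1).centralBinom ^ 2 * (2 * (n + 1) + 1) * (n + 1) ^ 2
        = ((n + 1) * (n + 1).centralBinom) ^ 2 * (2 * n + 3) := by ring
      _ = 4 * (2 * n + 1) * (2 * n + 3) * (n.centralBinom ^ 2 * (2 * n + 1)) := by
        rw [succ_mul_centralBinom_succ]; ring
      _ ≤ 16 * (n + 1) ^ 2 * 16 ^ n := by gcongr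
      _ = 16 ^ (n + 1) * (n + 1) ^ 2 := by ring

theorem centralBinom_succ_eq_two_mul_choose (n : ℕ) :
    (n + 1).centralBinom = 2 * (2 * n + 1).choose n := by
  rw [centralBinom, show 2 * (n + 1) = 2 * n + 1 + 1 by ring, choose_succ_succ,
    choose_symm_half]
  ring

theorem choose_half_sq_mul_le (m : ℕ) : m.choose (m / 2) ^ 2 * (m + 1) ≤ 4 ^ m := by
  obtain ⟨n, rfl | rfl⟩ := even_or_odd' m
  · have := centralBinom_sq_mul_le n
    rw [centralBinom_eq_two_mul_choose] at this
    simpa [pow_mul] using this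
  · have := centralBinom_sq_mul_le (n + 1)
    rw [centralBinom_succ_eq_two_mul_choose] at this
    rw [show (2 * n + 1) / 2 = n by omega]
    refine Nat.le_of_mul_le_mul_right (c := 4) ?_ (by norm_num)
    calc (2 * n + 1).choose n ^ 2 * (2 * n + 1 + 1) * 4
        ≤ (2 * (2 * n + 1).choose n) ^ 2 * (2 * (n + 1) + 1) := by ring_nf; omega
      _ ≤ 16 ^ (n + 1) := this
      _ = 4 ^ (2 * n + 1) * 4 := by rw [pow_succ, pow_succ, pow_mul]; ring

end Nat

theorem choose_half_div_two_pow_le (m : ℕ) :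
    (m.choose (m / 2) : ℝ) / 2 ^ m ≤ 1 / √(m + 1) := by
  rw [div_le_div_iff₀ (by positivity) (by positivity), one_mul]
  have h : ((m.choose (m / 2) ^ 2 * (m + 1) : ℕ) : ℝ) ≤ ((4 ^ m : ℕ) : ℝ) := by
    exact_mod_cast Nat.choose_half_sq_mul_le m
  have h4 : ((2 : ℝ) ^ m) ^ 2 = 4 ^ m := by rw [← pow_mul, mul_comm, pow_mul]; norm_num
  push_cast at h
  calc (m.choose (m / 2) : ℝ) * √(m + 1) = √((m.choose (m / 2)) ^ 2 * (m + 1)) := by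
        rw [Real.sqrt_mul' _ (by positivity), Real.sqrt_sq (by positivity)]
    _ ≤ √((2 ^ m) ^ 2) := Real.sqrt_le_sqrt (h4 ▸ h)
    _ = 2 ^ m := Real.sqrt_sq (by positivity)

theorem sum_choose_mul_pow_mul_one_sub_pow (q : ℝ) (n : ℕ) :
    ∑ k ∈ range (n + 1), n.choose k * q ^ k * (1 - q) ^ (n - k) = 1 := by
  have h := add_pow q (1 - q) n
  rw [add_sub_cancel, one_pow] at h
  exact (sum_congr rfl fun k _ ↦ by ring).trans h.symm

theorem sum_choose_mul_pow_div_succ_le {q : ℝ} (hq0 : 0 < q) (hq1 : q ≤ 1) (n : ℕ) :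
    ∑ k ∈ range (n + 1), n.choose k * q ^ k * (1 - q) ^ (n - k) / (k + 1) ≤
      1 / (q * (n + 1)) := by
  have h1q : 0 ≤ 1 - q := by linarith
  set g : ℕ → ℝ := fun j ↦ (n + 1).choose j * q ^ j * (1 - q) ^ (n + 1 - j)
  have hg_nonneg : 0 ≤ g 0 := by simp only [g]; positivity
  have hg : ∑ j ∈ range (n + 2), g j = 1 := sum_choose_mul_pow_mul_one_sub_pow q (n + 1)
  have hterm : ∀ k ∈ range (n + 1),
      n.choose k * q ^ k * (1 - q) ^ (n - k) / (k + 1) = g (k + 1) / (q * (n + 1)) := by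
    intro k hk
    have hchoose : ((n + 1 : ℕ) : ℝ) * n.choose k = (n + 1).choose (k + 1) * (k + 1) := by
      exact_mod_cast Nat.add_one_mul_choose_eq n k
    push_cast at hchoose
    rw [div_eq_div_iff (by positivity) (by positivity)]
    simp only [g, show n + 1 - (k + 1) = n - k by omega]
    linear_combination (q ^ (k + 1) * (1 - q) ^ (n - k)) * hchoose
  rw [sum_congr rfl hterm, ← sum_div]
  gcongr
  calc ∑ k ∈ range (n + 1), g (k + 1) ≤ ∑ k ∈ range (n + 1), g (k + 1) + g 0 :=
        le_add_of_nonneg_right hg_nonneg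
    _ = 1 := by rw [← sum_range_succ', hg]

theorem sum_choose_mul_pow_div_sqrt_succ_le {q : ℝ} (hq0 : 0 < q) (hq1 : q ≤ 1) (n : ℕ) :
    ∑ k ∈ range (n + 1), n.choose k * q ^ k * (1 - q) ^ (n - k) / √(k + 1) ≤
      1 / √(q * (n + 1)) := by
  set w : ℕ → ℝ := fun k ↦ n.choose k * q ^ k * (1 - q) ^ (n - k)
  have h1q : 0 ≤ 1 - q := by linarith
  have hw : ∀ k, 0 ≤ w k := fun k ↦ by simp only [w]; positivity
  have hw_sum : ∑ k ∈ range (n + 1), w k = 1 := sum_choose_mul_pow_mul_one_sub_pow q n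
  calc ∑ k ∈ range (n + 1), w k / √(k + 1)
      = ∑ k ∈ range (n + 1), √(w k) * √(w k / (k + 1)) := by
        refine sum_congr rfl fun k _ ↦ ?_
        rw [Real.sqrt_div' _ (by positivity), mul_div_assoc', Real.mul_self_sqrt (hw k)]
    _ ≤ √(∑ k ∈ range (n + 1), w k) * √(∑ k ∈ range (n + 1), w k / (k + 1)) :=
        Real.sum_sqrt_mul_sqrt_le _ hw fun k ↦ by have := hw k; positivity
    _ ≤ √(1 / (q * (n + 1))) := by
        rw [hw_sum, Real.sqrt_one, one_mul]
        exact Real.sqrt_le_sqrt (sum_choose_mul_pow_div_succ_le hq0 hq1 n)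
    _ = 1 / √(q * (n + 1)) := by rw [Real.sqrt_div' _ (by positivity), Real.sqrt_one]

section Antichain

variable {ι : Type*}

theorem IsAntichain.card_filter_sdiff_eq_le [DecidableEq ι] {𝒜 : Finset (Finset ι)}
    (h𝒜 : IsAntichain (· ⊆ ·) (𝒜 : Set (Finset ι))) (T R : Finset ι) :
    #{S ∈ 𝒜 | S \ T = R} ≤ (#T).choose (#T / 2) := by
  set fibre := {S ∈ 𝒜 | S \ T = R}
  set f : Finset ι → Finset T := fun S ↦ S.subtype (· ∈ T)
  have hreflect : ∀ S₁ ∈ fibre, ∀ S₂ ∈ fibre, f S₁ ⊆ f S₂ → S₁ ⊆ S₂ := by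
    intro S₁ h₁ S₂ h₂ h x hx
    by_cases hxT : x ∈ T
    · simpa [f] using h (mem_subtype.2 (show x ∈ S₁ from hx) : (⟨x, hxT⟩ : T) ∈ f S₁)
    · have : x ∈ S₁ \ T := mem_sdiff.2 ⟨hx, hxT⟩
      rw [(mem_filter.1 h₁).2, ← (mem_filter.1 h₂).2] at this
      exact (mem_sdiff.1 this).1
  have hinj : Set.InjOn f fibre := fun S₁ h₁ S₂ h₂ h ↦
    (hreflect S₁ h₁ S₂ h₂ h.le).antisymm (hreflect S₂ h₂ S₁ h₁ h.ge)
  have hanti : IsAntichain (· ⊆ ·) (SetLike.coe (fibre.image f)) := by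
    rintro _ hX _ hY hne hXY
    obtain ⟨S₁, h₁, rfl⟩ := mem_image.1 hX
    obtain ⟨S₂, h₂, rfl⟩ := mem_image.1 hY
    exact h𝒜 (mem_filter.1 h₁).1 (mem_filter.1 h₂).1 (fun h ↦ hne (h ▸ rfl))
      (hreflect S₁ h₁ S₂ h₂ hXY)
  rw [← card_image_of_injOn hinj]
  simpa using hanti.sperner

variable [Fintype ι]

theorem isAntichain_filter_sum_eq {α : ι → ℝ} (hα : ∀ i, 0 < α i) (b : ℝ) :
    IsAntichain (· ⊆ ·) (({S | ∑ i ∈ S, α i = b} : Finset (Finset ι)) : Set (Finset ι)) := by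
  intro X hX Y hY hne hXY
  obtain ⟨j, hjY, hjX⟩ := exists_of_ssubset (Finset.ssubset_iff_subset_ne.2 ⟨hXY, hne⟩)
  have hlt := sum_lt_sum_of_subset hXY hjY hjX (hα j) fun i _ _ ↦ (hα i).le
  simp only [coe_filter, mem_univ, true_and, Set.mem_ofPred_eq] at hX hY
  exact hlt.ne (hX.trans hY.symm)

variable [DecidableEq ι]

theorem IsAntichain.sum_prod_compl_le {𝒜 : Finset (Finset ι)}
    (h𝒜 : IsAntichain (· ⊆ ·) (𝒜 : Set (Finset ι))) {c c' : ι → ℝ} (hc : ∀ i, 0 ≤ c i)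
    (hc' : ∀ i, 0 ≤ c' i) (T : Finset ι) :
    ∑ S ∈ 𝒜, ∏ i ∈ Tᶜ, (if i ∈ S then c i else c' i) ≤
      (#T).choose (#T / 2) * ∏ i ∈ Tᶜ, (c i + c' i) := by
  set g : Finset ι → ℝ := fun R ↦ ∏ i ∈ Tᶜ, if i ∈ R then c i else c' i
  have hg : ∀ R, 0 ≤ g R := fun R ↦ prod_nonneg fun i _ ↦ by split_ifs; exacts [hc i, hc' i]
  have hsdiff : ∀ S, g S = g (S \ T) := fun S ↦
    prod_congr rfl fun i hi ↦ by simp [(mem_compl.1 hi)]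
  calc ∑ S ∈ 𝒜, g S
      = ∑ R ∈ Tᶜ.powerset, ∑ S ∈ 𝒜 with S \ T = R, g (S \ T) := by
        rw [sum_fiberwise_of_maps_to fun S _ ↦ mem_powerset.2 fun i hi ↦
          mem_compl.2 (mem_sdiff.1 hi).2]
        exact sum_congr rfl fun S _ ↦ hsdiff S
    _ = ∑ R ∈ Tᶜ.powerset, #{S ∈ 𝒜 | S \ T = R} * g R := by
        refine sum_congr rfl fun R _ ↦ ?_
        rw [← nsmul_eq_mul, ← sum_const]
        exact sum_congr rfl fun S hS ↦ by rw [(mem_filter.1 hS).2]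
    _ ≤ ∑ R ∈ Tᶜ.powerset, (#T).choose (#T / 2) * g R := by
        gcongr with R
        · exact hg R
        · exact_mod_cast h𝒜.card_filter_sdiff_eq_le T R
    _ = (#T).choose (#T / 2) * ∏ i ∈ Tᶜ, (c i + c' i) := by
        rw [← mul_sum, prod_add]
        congr 1
        refine sum_congr rfl fun R hR ↦ ?_
        simp only [g]
        rw [prod_ite, filter_mem_eq_inter, inter_eq_right.2 (mem_powerset.1 hR),
          ← sdiff_eq_filter]

theorem IsAntichain.sum_prod_add_le {𝒜 : Finset (Finset ι)}
    (h𝒜 : IsAntichain (· ⊆ ·) (𝒜 : Set (Finset ι))) {c c' : ι → ℝ} (hc : ∀ i, 0 ≤ c i)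
    (hc' : ∀ i, 0 ≤ c' i) {δ : ℝ} (hδ : 0 ≤ δ) :
    ∑ S ∈ 𝒜, ∏ i, (δ + if i ∈ S then c i else c' i) ≤
      ∑ T ∈ univ.powerset, δ ^ #T * ((#T).choose (#T / 2) * ∏ i ∈ Tᶜ, (c i + c' i)) := by
  have hexpand : ∀ S : Finset ι, ∏ i, (δ + if i ∈ S then c i else c' i) =
      ∑ T ∈ univ.powerset, δ ^ #T * ∏ i ∈ Tᶜ, if i ∈ S then c i else c' i := fun S ↦ by
    simp_rw [prod_add, prod_const, compl_eq_univ_sdiff]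
  simp_rw [hexpand]
  rw [sum_comm]
  gcongr with T
  rw [← mul_sum]
  gcongr
  exact h𝒜.sum_prod_compl_le hc hc' T

def bernoulliWeight (p : ι → ℝ) (S : Finset ι) : ℝ :=
  ∏ i, if i ∈ S then p i else 1 - p i

theorem bernoulliWeight_nonneg {p : ι → ℝ} (hp : ∀ i, p i ∈ Set.Icc 0 1) (S : Finset ι) :
    0 ≤ bernoulliWeight p S :=
  prod_nonneg fun i _ ↦ by split_ifs; exacts [(hp i).1, sub_nonneg.2 (hp i).2]

theorem IsAntichain.sum_bernoulliWeight_le {𝒜 : Finset (Finset ι)}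
    (h𝒜 : IsAntichain (· ⊆ ·) (𝒜 : Set (Finset ι))) {δ : ℝ} (hδ0 : 0 < δ) (hδ : δ ≤ 1 / 2)
    {p : ι → ℝ} (hp : ∀ i, p i ∈ Set.Icc δ (1 - δ)) :
    ∑ S ∈ 𝒜, bernoulliWeight p S ≤ 1 / √(2 * δ * (Fintype.card ι + 1)) := by
  set n := Fintype.card ι with hn
  have h2δ : 0 ≤ 1 - 2 * δ := by linarith
  have hsplit : ∀ S, bernoulliWeight p S =
      ∏ i, (δ + if i ∈ S then p i - δ else 1 - p i - δ) :=
    fun S ↦ prod_congr rfl fun i _ ↦ by split_ifs <;> ring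
  calc ∑ S ∈ 𝒜, bernoulliWeight p S
      ≤ ∑ T ∈ univ.powerset, δ ^ #T * ((#T).choose (#T / 2) * ∏ i ∈ Tᶜ, (1 - 2 * δ)) := by
        simp_rw [hsplit]
        convert h𝒜.sum_prod_add_le (c := fun i ↦ p i - δ) (c' := fun i ↦ 1 - p i - δ)
          (fun i ↦ sub_nonneg.2 (hp i).1) (fun i ↦ by linarith [(hp i).2]) hδ0.le using 4 with T
        exact prod_congr rfl fun i _ ↦ by ring
    _ = ∑ k ∈ range (n + 1),
          n.choose k * (2 * δ) ^ k * (1 - 2 * δ) ^ (n - k) * ((k.choose (k / 2) : ℝ) / 2 ^ k) := by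
        simp_rw [prod_const, card_compl]
        rw [sum_powerset_apply_card fun k ↦ δ ^ k * (k.choose (k / 2) * (1 - 2 * δ) ^ (n - k))]
        refine sum_congr (by simp [n]) fun k _ ↦ ?_
        rw [nsmul_eq_mul, mul_pow, card_univ, ← hn]
        field_simp
    _ ≤ ∑ k ∈ range (n + 1), n.choose k * (2 * δ) ^ k * (1 - 2 * δ) ^ (n - k) * (1 / √(k + 1)) := by
        gcongr ∑ k ∈ _, _ * ?_ with k
        exact choose_half_div_two_pow_le k
    _ ≤ 1 / √(2 * δ * (n + 1)) := by
        simp_rw [mul_one_div]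
        exact sum_choose_mul_pow_div_sqrt_succ_le (by linarith) (by linarith) n

theorem bernoulliWeight_symmDiff (p : ι → ℝ) (F S : Finset ι) :
    bernoulliWeight (fun i ↦ if i ∈ F then 1 - p i else p i) (symmDiff F S) =
      bernoulliWeight p S :=
  prod_congr rfl fun i _ ↦ by
    by_cases hS : i ∈ S <;> by_cases hF : i ∈ F <;> simp [hS, hF, mem_symmDiff]

theorem sum_abs_symmDiff_filter_neg (α : ι → ℝ) (S : Finset ι) :
    ∑ i ∈ symmDiff ({i | α i < 0} : Finset ι) S, |α i| =
      ∑ i ∈ S, α i - ∑ i with α i < 0, α i := by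
  set F : Finset ι := {i | α i < 0}
  have hneg : ∀ i, i ∈ F ↔ α i < 0 := fun i ↦ by simp [F]
  rw [symmDiff_comm, symmDiff_def, sup_eq_union, sum_union disjoint_sdiff_sdiff,
    ← sum_sdiff_sub_sum_sdiff, sub_eq_add_neg, ← sum_neg_distrib]
  congr 1 <;> refine sum_congr rfl fun i hi ↦ ?_
  · exact abs_of_nonneg (not_lt.1 ((hneg i).not.1 (mem_sdiff.1 hi).2))
  · exact abs_of_neg ((hneg i).1 (mem_sdiff.1 hi).1)

theorem sum_bernoulliWeight_filter_sum_eq_le {α : ι → ℝ} (hα : ∀ i, α i ≠ 0) (b : ℝ)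
    {δ : ℝ} (hδ0 : 0 < δ) (hδ : δ ≤ 1 / 2) {p : ι → ℝ} (hp : ∀ i, p i ∈ Set.Icc δ (1 - δ)) :
    ∑ S with ∑ i ∈ S, α i = b, bernoulliWeight p S ≤
      1 / √(2 * δ * (Fintype.card ι + 1)) := by
  set F : Finset ι := {i | α i < 0}
  set p' : ι → ℝ := fun i ↦ if i ∈ F then 1 - p i else p i
  have hp' : ∀ i, p' i ∈ Set.Icc δ (1 - δ) := fun i ↦ by
    obtain ⟨h₁, h₂⟩ := hp i
    simp only [p']
    split_ifs <;> constructor <;> linarith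
  have hflip : ∑ S with ∑ i ∈ S, α i = b, bernoulliWeight p S =
      ∑ S with ∑ i ∈ S, |α i| = b - ∑ i ∈ F, α i, bernoulliWeight p' S := by
    rw [sum_filter, sum_filter]
    refine Fintype.sum_bijective (symmDiff F) (symmDiff_right_involutive F).bijective
      _ _ fun S ↦ ?_
    simp only [F, p', sum_abs_symmDiff_filter_neg, sub_left_inj, bernoulliWeight_symmDiff]
  rw [hflip]
  exact (isAntichain_filter_sum_eq (fun i ↦ abs_pos.2 (hα i)) _).sum_bernoulliWeight_le
    hδ0 hδ hp'

end Antichain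

section Probability

variable {ι Ω : Type*} [MeasurableSpace Ω] {μ : Measure Ω} {ε : ι → Ω → ℝ} {p : ι → ℝ}

theorem ae_forall_eq_one_or_eq_zero [Countable ι] [IsProbabilityMeasure μ]
    (hε : ∀ i, Measurable (ε i)) (hp : ∀ i, p i ∈ Set.Icc 0 1)
    (hber : ∀ i, μ {ω | ε i ω = 1} = ENNReal.ofReal (p i) ∧
      μ {ω | ε i ω = 0} = ENNReal.ofReal (1 - p i)) :
    ∀ᵐ ω ∂μ, ∀ i, ε i ω = 1 ∨ ε i ω = 0 := by
  refine ae_all_iff.2 fun i ↦ ae_iff.2 ?_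
  have h₁ : MeasurableSet {ω | ε i ω = 1} := hε i (measurableSet_singleton 1)
  have h₀ : MeasurableSet {ω | ε i ω = 0} := hε i (measurableSet_singleton 0)
  have hdisj : Disjoint {ω | ε i ω = 1} {ω | ε i ω = 0} :=
    Set.disjoint_left.2 fun ω (h : ε i ω = 1) (h' : ε i ω = 0) ↦ one_ne_zero (h.symm.trans h')
  refine (prob_compl_eq_zero_iff (h₁.union h₀)).2 ?_
  rw [measure_union hdisj h₀, (hber i).1, (hber i).2,
    ← ENNReal.ofReal_add (hp i).1 (sub_nonneg.2 (hp i).2), add_sub_cancel, ENNReal.ofReal_one]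

variable [Fintype ι] [DecidableEq ι]

theorem ProbabilityTheory.iIndepFun.measure_forall_eq_ite (hind : iIndepFun ε μ)
    (hp : ∀ i, p i ∈ Set.Icc 0 1)
    (hber : ∀ i, μ {ω | ε i ω = 1} = ENNReal.ofReal (p i) ∧
      μ {ω | ε i ω = 0} = ENNReal.ofReal (1 - p i)) (S : Finset ι) :
    μ {ω | ∀ i, ε i ω = if i ∈ S then 1 else 0} = ENNReal.ofReal (bernoulliWeight p S) := by
  have h := hind.measure_inter_preimage_eq_mul univ (sets := fun i ↦ {if i ∈ S then 1 else 0})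
    fun i _ ↦ measurableSet_singleton _
  have hevent : {ω | ∀ i, ε i ω = if i ∈ S then 1 else 0} =
      ⋂ i ∈ univ, ε i ⁻¹' {if i ∈ S then 1 else 0} := by
    ext; simp
  rw [hevent, h, bernoulliWeight,
    ENNReal.ofReal_prod_of_nonneg fun i _ ↦ ite_nonneg (hp i).1 (sub_nonneg.2 (hp i).2)]
  refine prod_congr rfl fun i _ ↦ ?_
  split_ifs
  exacts [(hber i).1, (hber i).2]

theorem measure_sum_mul_eq_le [IsProbabilityMeasure μ] (hind : iIndepFun ε μ)
    (hε : ∀ i, Measurable (ε i)) (hp : ∀ i, p i ∈ Set.Icc 0 1)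
    (hber : ∀ i, μ {ω | ε i ω = 1} = ENNReal.ofReal (p i) ∧
      μ {ω | ε i ω = 0} = ENNReal.ofReal (1 - p i)) (α : ι → ℝ) (b : ℝ) :
    μ {ω | ∑ i, α i * ε i ω = b} ≤
      ENNReal.ofReal (∑ S with ∑ i ∈ S, α i = b, bernoulliWeight p S) := by
  set 𝒜 : Finset (Finset ι) := {S | ∑ i ∈ S, α i = b}
  set E : Finset ι → Set Ω := fun S ↦ {ω | ∀ i, ε i ω = if i ∈ S then 1 else 0}
  have hcover : {ω | ∑ i, α i * ε i ω = b} ≤ᵐ[μ] ⋃ S ∈ 𝒜, E S := by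
    filter_upwards [ae_forall_eq_one_or_eq_zero hε hp hber] with ω h01 hsum
    set S : Finset ι := {i | ε i ω = 1}
    have hE : ∀ i, ε i ω = if i ∈ S then 1 else 0 := fun i ↦ by
      rcases h01 i with h | h <;> simp [S, h]
    refine Set.mem_biUnion (x := S) (mem_coe.2 (mem_filter.2 ⟨mem_univ _, ?_⟩)) hE
    rw [← hsum]
    simp only [hE, mul_ite, mul_one, mul_zero]
    rw [sum_ite_mem, univ_inter]
  calc μ {ω | ∑ i, α i * ε i ω = b}
      ≤ μ (⋃ S ∈ 𝒜, E S) := measure_mono_ae hcover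
    _ ≤ ∑ S ∈ 𝒜, μ (E S) := measure_biUnion_finset_le _ _
    _ = ENNReal.ofReal (∑ S with ∑ i ∈ S, α i = b, bernoulliWeight p S) := by
        rw [ENNReal.ofReal_sum_of_nonneg fun S _ ↦ bernoulliWeight_nonneg hp S]
        exact sum_congr rfl fun S _ ↦ hind.measure_forall_eq_ite hp hber S

end Probability

/-- **Littlewood–Offord estimate for non-identically distributed Bernoulli variables.**
For `p₀ ∈ (1/2, 1)` there is `C > 0` such that for all `s ≥ 1`, all nonzero reals
`α₁, …, α_s`, every real `b`, and independent Bernoulli random variables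
`ε₁, …, ε_s` with parameters in `(1 - p₀, p₀)`, one has
`P(α₁ε₁ + ⋯ + α_sε_s = b) ≤ C / √s`. -/
theorem littlewood_offord (p₀ : ℝ) (hp₀ : p₀ ∈ Set.Ioo (1 / 2 : ℝ) 1) :
    ∃ C : ℝ, 0 < C ∧
      ∀ (s : ℕ), 1 ≤ s →
      ∀ (α : Fin s → ℝ), (∀ i, α i ≠ 0) →
      ∀ (b : ℝ),
      ∀ (Ω : Type) (_ : MeasureSpace Ω) (_ : IsProbabilityMeasure (ℙ : Measure Ω))
        (ε : Fin s → Ω → ℝ) (p : Fin s → ℝ),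
        (∀ i, Measurable (ε i)) →
        (∀ i, p i ∈ Set.Ioo (1 - p₀) p₀) →
        (∀ i, ℙ {ω | ε i ω = 1} = ENNReal.ofReal (p i) ∧
              ℙ {ω | ε i ω = 0} = ENNReal.ofReal (1 - p i)) →
        iIndepFun ε ℙ →
        (ℙ {ω | ∑ i, α i * ε i ω = b}).toReal ≤ C / Real.sqrt s := by
  obtain ⟨hp₀_gt, hp₀_lt⟩ := hp₀
  have hδ : 0 < 1 - p₀ := by linarith
  refine ⟨1 / √(2 * (1 - p₀)), by positivity, ?_⟩
  intro s hs α hα b Ω _ _ ε p hε hp hber hind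
  have hp_Icc : ∀ i, p i ∈ Set.Icc (1 - p₀) (1 - (1 - p₀)) := fun i ↦
    ⟨(hp i).1.le, by linarith [(hp i).2]⟩
  have hp_unit : ∀ i, p i ∈ Set.Icc 0 1 := fun i ↦
    ⟨by linarith [(hp i).1], by linarith [(hp i).2]⟩
  have hs' : (1 : ℝ) ≤ s := by exact_mod_cast hs
  calc (ℙ {ω | ∑ i, α i * ε i ω = b}).toReal
      ≤ ∑ S with ∑ i ∈ S, α i = b, bernoulliWeight p S :=
        ENNReal.toReal_le_of_le_ofReal (sum_nonneg fun S _ ↦ bernoulliWeight_nonneg hp_unit S)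
          (measure_sum_mul_eq_le hind hε hp_unit hber α b)
    _ ≤ 1 / √(2 * (1 - p₀) * (s + 1)) := by
        simpa using sum_bernoulliWeight_filter_sum_eq_le hα b hδ (by linarith) hp_Icc
    _ ≤ 1 / √(2 * (1 - p₀)) / √s := by
        rw [div_div, ← Real.sqrt_mul (by positivity)]
        gcongr
        linarith
end

section
/- Let p_0 ∈ (1/2, 1) and let A = (a_{ij}) be an m × n random matrix whose entries have the form a_{ij} = c_{ij} + d_{ij} ε_{ij}, where the c_{ij} are fixed real numbers, the d_{ij} are fixed nonzero real numbers, and the ε_{ij} are mutually independent Bernoulli random variables with parameters p_{ij} ∈ (1 - p_0, p_0). Then for every k with 1 ≤ k ≤ min(m, n), the probability that the strong column rank of A is smaller than k (i.e., that there exist k columns of A which are linearly dependent) is at most binom(n, k) · p_0^{m-k+1} / (1 - p_0). -/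
/-!
If some `k` columns are dependent, then listing them in some order, one of them lies in the span
of the `t < k` columns listed before it while those are independent. Conditionally on all other
columns that span is a fixed subspace `V` of dimension at most `t`, and a vector of `V` is
determined by at most `t` of its coordinates; so the `m - t` remaining independent entries of the
column must each take a prescribed value, which happens with probability at most `p₀ ^ (m - t)`.
Summing over `t < k` gives at most `p₀ ^ (m - k + 1) / (1 - p₀)`, and a union bound over the
`n.choose k` sets of columns finishes the proof.
-/

open MeasureTheory ProbabilityTheory Module
open scoped ENNReal

theorem Submodule.exists_finset_card_le_finrank_forall_eq_zero {K ι : Type*} [Field K]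
    [Fintype ι] (V : Submodule K (ι → K)) :
    ∃ s : Finset ι, s.card ≤ finrank K V ∧ ∀ x ∈ V, (∀ i ∈ s, x i = 0) → x = 0 := by
  classical
  induction h : finrank K V using Nat.strong_induction_on generalizing V with
  | _ r ih =>
  by_cases hV : V = ⊥
  · exact ⟨∅, by simp, fun x hx _ => by simpa [hV] using hx⟩
  obtain ⟨x, hxV, hx0⟩ := V.ne_bot_iff.1 hV
  obtain ⟨i, hi⟩ : ∃ i, x i ≠ 0 := Function.ne_iff.1 hx0
  set V' := V ⊓ LinearMap.ker (LinearMap.proj i : (ι → K) →ₗ[K] K)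
  have hlt : finrank K V' < r :=
    h ▸ Submodule.finrank_lt_finrank_of_lt
      (SetLike.lt_iff_le_and_exists.2 ⟨inf_le_left, x, hxV, fun hx => hi (by simpa using hx.2)⟩)
  obtain ⟨s, hs, hdet⟩ := ih _ hlt V' rfl
  refine ⟨insert i s, (Finset.card_insert_le _ _).trans (by omega), fun y hy hys => ?_⟩
  exact hdet y ⟨hy, by simpa using hys i (s.mem_insert_self i)⟩
    fun j hj => hys j (Finset.mem_insert_of_mem hj)

namespace MeasureTheory.Measure

variable {ι : Type*} [Fintype ι] {X : ι → Type*} [∀ i, MeasurableSpace (X i)]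
  {μ : ∀ i, Measure (X i)} [∀ i, IsProbabilityMeasure (μ i)] {G : Set (∀ i, X i)}
  {c q : ℝ≥0∞}

theorem pi_le_of_forall_lmarginal_le [DecidableEq ι] (hG : MeasurableSet G) (s : Finset ι)
    (h : ∀ x, (∫⋯∫⁻_s, G.indicator 1 ∂μ) x ≤ c) : Measure.pi μ G ≤ c := by
  have hc : ∀ x, (∫⋯∫⁻_s, fun _ => c ∂μ) x = c := fun x => by simp [lmarginal]
  calc Measure.pi μ G = ∫⁻ x, G.indicator 1 x ∂Measure.pi μ := (lintegral_indicator_one hG).symm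
    _ ≤ ∫⁻ _, c ∂Measure.pi μ :=
      lintegral_le_of_lmarginal_le s (measurable_one.indicator hG) measurable_const
        fun x => (h x).trans (hc x).ge
    _ = c := by simp

theorem pi_le_of_forall_update_le [DecidableEq ι] (hG : MeasurableSet G) (a : ι)
    (h : ∀ x, μ a {t | Function.update x a t ∈ G} ≤ c) : Measure.pi μ G ≤ c := by
  refine pi_le_of_forall_lmarginal_le hG {a} fun x => ?_
  rw [lmarginal_singleton]
  calc ∫⁻ t, G.indicator 1 (Function.update x a t) ∂μ a
      = ∫⁻ t, {t | Function.update x a t ∈ G}.indicator 1 t ∂μ a := rfl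
    _ = μ a {t | Function.update x a t ∈ G} :=
      lintegral_indicator_one (measurable_update x hG)
    _ ≤ c := h x

theorem pi_le_pow_card_of_determined_outside (hG : MeasurableSet G)
    (hatom : ∀ i a, μ i {a} ≤ q) (s : Finset ι)
    (hdet : ∀ x ∈ G, ∀ y ∈ G, (∀ i ∉ s, x i = y i) → x = y) :
    Measure.pi μ G ≤ q ^ s.card := by
  classical
  refine pi_le_of_forall_lmarginal_le hG s fun x => ?_
  set slice := {y : ∀ i : s, X i | Function.updateFinset x s y ∈ G}
  have hslice : slice.Subsingleton := fun y hy y' hy' => by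
    have := hdet _ hy _ hy' fun i hi => by simp [Function.updateFinset, hi]
    funext i
    simpa [Function.updateFinset, i.2] using congrFun this i
  calc (∫⋯∫⁻_s, G.indicator 1 ∂μ) x
      = ∫⁻ y, slice.indicator 1 y ∂Measure.pi fun i : s => μ i := rfl
    _ = Measure.pi (fun i : s => μ i) slice :=
      lintegral_indicator_one (measurable_updateFinset hG)
    _ ≤ q ^ s.card := by
      rcases hslice.eq_empty_or_singleton with h | ⟨y, h⟩
      · simp [h]
      · rw [h, pi_singleton]
        simpa using
          Finset.prod_le_pow_card Finset.univ (fun i : s => μ i {y i}) q fun i _ => hatom i (y i)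

theorem pi_submodule_le {μ : ι → Measure ℝ} [∀ i, IsProbabilityMeasure (μ i)]
    (hq : q ≤ 1) (hatom : ∀ i a, μ i {a} ≤ q) (V : Submodule ℝ (ι → ℝ)) :
    Measure.pi μ V ≤ q ^ (Fintype.card ι - finrank ℝ V) := by
  classical
  obtain ⟨s, hs, hdet⟩ := V.exists_finset_card_le_finrank_forall_eq_zero
  calc Measure.pi μ V ≤ q ^ sᶜ.card := by
        refine pi_le_pow_card_of_determined_outside
          V.closed_of_finiteDimensional.measurableSet hatom sᶜ fun x hx y hy hxy => sub_eq_zero.1 <| hdet _ (V.sub_mem hx hy) fun i hi => ?_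
        simpa [sub_eq_zero] using hxy i (by simpa using hi)
    _ ≤ q ^ (Fintype.card ι - finrank ℝ V) :=
        pow_le_pow_of_le_one zero_le hq (by rw [Finset.card_compl]; omega)

end MeasureTheory.Measure

section LinearIndependence

variable {ι E : Type*} [Fintype ι] [NormedAddCommGroup E] [NormedSpace ℝ E]
  [FiniteDimensional ℝ E] [MeasurableSpace E] [BorelSpace E]
  {ν : ι → Measure E} [∀ j, IsProbabilityMeasure (ν j)] {q : ℝ≥0∞}

theorem measurableSet_setOf_linearIndepOn (s : Set ι) :
    MeasurableSet {v : ι → E | LinearIndepOn ℝ v s} :=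
  (isOpen_setOfPred_linearIndependent.preimage
    (by fun_prop : Continuous fun (v : ι → E) (x : s) => v x)).measurableSet

theorem measure_pi_not_linearIndepOn_insert_le
    (hν : ∀ j (V : Submodule ℝ E), ν j V ≤ q ^ (finrank ℝ E - finrank ℝ V)) (hq : q ≤ 1)
    {a : ι} {s : Finset ι} (ha : a ∉ s) :
    Measure.pi ν {v | ¬ LinearIndepOn ℝ v (insert a ↑s) ∧ LinearIndepOn ℝ v s} ≤
      q ^ (finrank ℝ E - s.card) := by
  classical
  refine Measure.pi_le_of_forall_update_le
    ((measurableSet_setOf_linearIndepOn _).compl.inter (measurableSet_setOf_linearIndepOn _)) a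
    fun v => ?_
  have hv : ∀ w, Function.update v a w '' s = v '' s := fun w =>
    Set.image_congr fun j hj => Function.update_of_ne (ne_of_mem_of_not_mem hj ha) _ _
  have hslice : {w | Function.update v a w ∈ {v | ¬ LinearIndepOn ℝ v (insert a ↑s) ∧
      LinearIndepOn ℝ v s}} ⊆ Submodule.span ℝ (v '' s) := by
    rintro w ⟨hdep, hind⟩
    rw [linearIndepOn_insert (by exact_mod_cast ha), Function.update_self, hv] at hdep
    exact not_not.1 fun h => hdep ⟨hind, h⟩
  have hrank : finrank ℝ (Submodule.span ℝ (v '' s)) ≤ s.card := by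
    rw [← Finset.coe_image]
    exact (finrank_span_finset_le_card _).trans Finset.card_image_le
  calc ν a _ ≤ ν a (Submodule.span ℝ (v '' s)) := measure_mono hslice
    _ ≤ q ^ (finrank ℝ E - finrank ℝ (Submodule.span ℝ (v '' s))) := hν a _
    _ ≤ q ^ (finrank ℝ E - s.card) := pow_le_pow_of_le_one zero_le hq (by omega)

theorem measure_pi_not_linearIndepOn_le
    (hν : ∀ j (V : Submodule ℝ E), ν j V ≤ q ^ (finrank ℝ E - finrank ℝ V)) (hq : q ≤ 1)
    (s : Finset ι) :
    Measure.pi ν {v | ¬ LinearIndepOn ℝ v s} ≤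
      ∑ t ∈ Finset.range s.card, q ^ (finrank ℝ E - t) := by
  classical
  induction s using Finset.induction_on with
  | empty => simp
  | insert a s ha ih =>
    have hsub : {v : ι → E | ¬ LinearIndepOn ℝ v ↑(insert a s)} ⊆
        {v | ¬ LinearIndepOn ℝ v s} ∪
          {v | ¬ LinearIndepOn ℝ v (insert a ↑s) ∧ LinearIndepOn ℝ v s} := fun v hv => by
      by_cases h : LinearIndepOn ℝ v s
      · exact Or.inr ⟨by simpa using hv, h⟩
      · exact Or.inl h
    rw [Finset.card_insert_of_notMem ha, Finset.sum_range_succ]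
    exact (measure_mono hsub).trans <| (measure_union_le _ _).trans <|
      add_le_add ih (measure_pi_not_linearIndepOn_insert_le hν hq ha)

theorem measure_pi_exists_not_linearIndepOn_le
    (hν : ∀ j (V : Submodule ℝ E), ν j V ≤ q ^ (finrank ℝ E - finrank ℝ V)) (hq : q ≤ 1)
    (k : ℕ) :
    Measure.pi ν {v | ∃ S : Finset ι, S.card = k ∧ ¬ LinearIndepOn ℝ v (S : Set ι)} ≤
      (Fintype.card ι).choose k * ∑ t ∈ Finset.range k, q ^ (finrank ℝ E - t) := by
  have hcover : {v : ι → E | ∃ S : Finset ι, S.card = k ∧ ¬ LinearIndepOn ℝ v (S : Set ι)} =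
      ⋃ S ∈ Finset.powersetCard k (Finset.univ : Finset ι),
        {v | ¬ LinearIndepOn ℝ v (S : Set ι)} := by
    ext v; simp
  calc Measure.pi ν _ ≤ ∑ S ∈ Finset.powersetCard k (Finset.univ : Finset ι),
        Measure.pi ν {v | ¬ LinearIndepOn ℝ v (S : Set ι)} :=
          hcover ▸ measure_biUnion_finset_le _ _
    _ ≤ ∑ S ∈ Finset.powersetCard k (Finset.univ : Finset ι),
        ∑ t ∈ Finset.range k, q ^ (finrank ℝ E - t) :=
      Finset.sum_le_sum fun S hS => by
        simpa [(Finset.mem_powersetCard_univ.1 hS)] using measure_pi_not_linearIndepOn_le hν hq S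
    _ = _ := by simp

end LinearIndependence

theorem sum_range_pow_sub_le {x : ℝ} (hx0 : 0 ≤ x) (hx1 : x < 1) {m k : ℕ} (hkm : k ≤ m) :
    ∑ t ∈ Finset.range k, x ^ (m - t) ≤ x ^ (m - k + 1) / (1 - x) :=
  calc ∑ t ∈ Finset.range k, x ^ (m - t) = ∑ t ∈ Finset.range k, x ^ (m - k + 1 + t) := by
        rw [← Finset.sum_range_reflect]
        refine Finset.sum_congr rfl fun t ht => ?_
        rw [Finset.mem_range] at ht
        congr 1
        omega
    _ = ∑ i ∈ Finset.Ico (m - k + 1) (m + 1), x ^ i := by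
        rw [Finset.sum_Ico_eq_sum_range, show m + 1 - (m - k + 1) = k by omega]
    _ ≤ x ^ (m - k + 1) / (1 - x) := geom_sum_Ico_le_of_lt_one hx0 hx1

section Probability

variable {Ω : Type*} [MeasurableSpace Ω] {P : Measure Ω}

theorem measure_eq_le_of_bernoulli [IsProbabilityMeasure P] {ε : Ω → ℝ} (hε : Measurable ε)
    {p : ℝ} (h1 : P {ω | ε ω = 1} = ENNReal.ofReal p)
    (h0 : P {ω | ε ω = 0} = ENNReal.ofReal (1 - p)) (r : ℝ) :
    P {ω | ε ω = r} ≤ ENNReal.ofReal (max p (1 - p)) := by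
  by_cases hr1 : r = 1
  · rw [hr1, h1]
    exact ENNReal.ofReal_le_ofReal (le_max_left _ _)
  by_cases hr0 : r = 0
  · rw [hr0, h0]
    exact ENNReal.ofReal_le_ofReal (le_max_right _ _)
  have hm1 : MeasurableSet {ω | ε ω = 1} := hε (measurableSet_singleton 1)
  have hm0 : MeasurableSet {ω | ε ω = 0} := hε (measurableSet_singleton 0)
  have hdisj : Disjoint {ω | ε ω = 1} {ω | ε ω = 0} :=
    Set.disjoint_left.2 fun ω h1 h0 => one_ne_zero (h1.symm.trans h0)
  calc P {ω | ε ω = r} ≤ P ({ω | ε ω = 1} ∪ {ω | ε ω = 0})ᶜ :=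
        measure_mono fun ω hω => by simp_all
    _ = 1 - (ENNReal.ofReal p + ENNReal.ofReal (1 - p)) := by
        rw [prob_compl_eq_one_sub (hm1.union hm0), measure_union hdisj hm0, h1, h0]
    _ ≤ 1 - ENNReal.ofReal (p + (1 - p)) := tsub_le_tsub_left ENNReal.ofReal_add_le 1
    _ ≤ _ := by simp

theorem map_const_add_mul_singleton {ε : Ω → ℝ} (hε : Measurable ε) {c d : ℝ} (hd : d ≠ 0)
    (a : ℝ) : P.map (fun ω => c + d * ε ω) {a} = P {ω | ε ω = (a - c) / d} := by
  rw [Measure.map_apply (by fun_prop) (measurableSet_singleton a)]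
  congr 1
  ext ω
  simp only [Set.mem_preimage, Set.mem_singleton_iff, Set.mem_ofPred_eq, eq_div_iff hd]
  constructor <;> intro h <;> linarith

theorem ProbabilityTheory.iIndepFun.map_curry_eq_pi_pi {ι κ β : Type*} [Fintype ι] [Fintype κ]
    [MeasurableSpace β] {X : ι × κ → Ω → β} (hX : ∀ z, Measurable (X z)) (h : iIndepFun X P) :
    P.map (fun ω i j => X (i, j) ω) =
      Measure.pi fun i => Measure.pi fun j => P.map (X (i, j)) := by
  have := h.isProbabilityMeasure
  have : ∀ z, IsProbabilityMeasure (P.map (X z)) :=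
    fun z => Measure.isProbabilityMeasure_map (hX z).aemeasurable
  have hcurry : (fun ω i j => X (i, j) ω) = MeasurableEquiv.curry ι κ β ∘ fun ω z => X z ω := rfl
  rw [hcurry, ← Measure.map_map (MeasurableEquiv.measurable _) (measurable_pi_lambda _ hX),
    h.map_fun_eq_pi_map fun z => (hX z).aemeasurable, ← Measure.infinitePi_eq_pi,
    Measure.infinitePi_map_curry (fun i j => P.map (X (i, j)))]
  simp only [Measure.infinitePi_eq_pi]

theorem measure_exists_not_linearIndepOn_cols_le {ι κ : Type*} [Fintype ι] [Fintype κ]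
    {A : κ × ι → Ω → ℝ} (hA : ∀ z, Measurable (A z)) (hindep : iIndepFun A P)
    {q : ℝ≥0∞} (hq : q ≤ 1) (hatom : ∀ z a, P.map (A z) {a} ≤ q) (k : ℕ) :
    P {ω | ∃ S : Finset ι, S.card = k ∧ ¬ LinearIndepOn ℝ (fun j i => A (i, j) ω) (S : Set ι)} ≤
      (Fintype.card ι).choose k * ∑ t ∈ Finset.range k, q ^ (Fintype.card κ - t) := by
  have := hindep.isProbabilityMeasure
  have : ∀ z, IsProbabilityMeasure (P.map (A z)) :=
    fun z => Measure.isProbabilityMeasure_map (hA z).aemeasurable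
  have hcol : ∀ j (V : Submodule ℝ (κ → ℝ)), Measure.pi (fun i => P.map (A (i, j))) V ≤
      q ^ (finrank ℝ (κ → ℝ) - finrank ℝ V) := fun j V => by
    simpa using Measure.pi_submodule_le hq (fun i => hatom (i, j)) V
  calc _ ≤ P.map (fun ω j i => A (i, j) ω)
        {v | ∃ S : Finset ι, S.card = k ∧ ¬ LinearIndepOn ℝ v (S : Set ι)} :=
        Measure.le_map_apply (by fun_prop) _
    _ = Measure.pi (fun j => Measure.pi fun i => P.map (A (i, j)))
        {v | ∃ S : Finset ι, S.card = k ∧ ¬ LinearIndepOn ℝ v (S : Set ι)} :=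
        congrArg (fun μ : Measure (ι → κ → ℝ) => μ _) <|
          (hindep.precomp Prod.swap_injective).map_curry_eq_pi_pi fun z => hA z.swap
    _ ≤ _ := by simpa using measure_pi_exists_not_linearIndepOn_le hcol hq k

end Probability

theorem strong_column_rank_bound_general (p₀ : ℝ) (hp₀ : p₀ ∈ Set.Ioo (1 / 2 : ℝ) 1)
    (m n : ℕ)
    (Ω : Type) [MeasureSpace Ω] [IsProbabilityMeasure (ℙ : Measure Ω)]
    (c d : Fin m → Fin n → ℝ) (hd : ∀ i j, d i j ≠ 0)
    (ε : Fin m → Fin n → Ω → ℝ) (p : Fin m → Fin n → ℝ)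
    (hmeas : ∀ i j, Measurable (ε i j))
    (hp : ∀ i j, p i j ∈ Set.Ioo (1 - p₀) p₀)
    (hber : ∀ i j, ℙ {ω | ε i j ω = 1} = ENNReal.ofReal (p i j) ∧
                   ℙ {ω | ε i j ω = 0} = ENNReal.ofReal (1 - p i j))
    (hindep : iIndepFun (β := fun _ : Fin m × Fin n => ℝ)
      (fun q => ε q.1 q.2) ℙ)
    (k : ℕ) (hk2 : k ≤ min m n) :
    (ℙ {ω | ∃ S : Finset (Fin n), S.card = k ∧
        ¬ LinearIndependent ℝ
          (fun j : S => fun i : Fin m => c i (j : Fin n) + d i j * ε i j ω)}).toReal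
      ≤ (n.choose k : ℝ) * p₀ ^ (m - k + 1) / (1 - p₀) := by
  obtain ⟨hp₀l, hp₀u⟩ := hp₀
  have hq : ENNReal.ofReal p₀ ≤ 1 := ENNReal.ofReal_le_one.2 hp₀u.le
  set A : Fin m × Fin n → Ω → ℝ := fun z ω => c z.1 z.2 + d z.1 z.2 * ε z.1 z.2 ω
  have hA : ∀ z, Measurable (A z) := fun z => by fun_prop
  have hatom : ∀ z a, Measure.map (A z) ℙ {a} ≤ ENNReal.ofReal p₀ := fun z a => by
    obtain ⟨hp1, hp2⟩ := hp z.1 z.2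
    rw [map_const_add_mul_singleton (hmeas z.1 z.2) (hd z.1 z.2)]
    exact (measure_eq_le_of_bernoulli (hmeas z.1 z.2) (hber z.1 z.2).1 (hber z.1 z.2).2 _).trans
      (ENNReal.ofReal_le_ofReal (max_le hp2.le (by linarith)))
  have hbound := measure_exists_not_linearIndepOn_cols_le hA
    (hindep.comp (fun z x => c z.1 z.2 + d z.1 z.2 * x) fun z => by fun_prop) hq hatom k
  simp only [Fintype.card_fin] at hbound
  calc _ ≤ ((n.choose k : ℝ≥0∞) * ∑ t ∈ Finset.range k, ENNReal.ofReal p₀ ^ (m - t)).toReal :=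
        ENNReal.toReal_mono (by simp [ENNReal.mul_eq_top, ENNReal.pow_eq_top_iff]) hbound
    _ = n.choose k * ∑ t ∈ Finset.range k, p₀ ^ (m - t) := by
        simp [ENNReal.toReal_sum, ENNReal.toReal_ofReal (by linarith : 0 ≤ p₀)]
    _ ≤ _ := by
        rw [mul_div_assoc]
        gcongr
        exact sum_range_pow_sub_le (by linarith) hp₀u (hk2.trans (min_le_left _ _))

/-- **Strong column rank bound.**
Let `A` be an `m × n` random matrix with entries `a i j = c i j + d i j * ε i j` where
the `c i j` are fixed reals, the `d i j` are fixed nonzero reals, and the `ε i j` are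
independent Bernoulli random variables with parameters in `(1 - p₀, p₀)`, `p₀ ∈ (1/2, 1)`.
Then for any `1 ≤ k ≤ min m n`, the probability that some `k` columns of `A` are linearly
dependent (i.e. that the strong column rank is `< k`) is at most
`(n choose k) * p₀^(m - k + 1) / (1 - p₀)`. -/
theorem strong_column_rank_bound (p₀ : ℝ) (hp₀ : p₀ ∈ Set.Ioo (1 / 2 : ℝ) 1)
    (m n : ℕ)
    (Ω : Type) [MeasureSpace Ω] [IsProbabilityMeasure (ℙ : Measure Ω)]
    (c d : Fin m → Fin n → ℝ) (hd : ∀ i j, d i j ≠ 0)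
    (ε : Fin m → Fin n → Ω → ℝ) (p : Fin m → Fin n → ℝ)
    (hmeas : ∀ i j, Measurable (ε i j))
    (hp : ∀ i j, p i j ∈ Set.Ioo (1 - p₀) p₀)
    (hber : ∀ i j, ℙ {ω | ε i j ω = 1} = ENNReal.ofReal (p i j) ∧
                   ℙ {ω | ε i j ω = 0} = ENNReal.ofReal (1 - p i j))
    (hindep : iIndepFun (β := fun _ : Fin m × Fin n => ℝ)
      (fun q => ε q.1 q.2) ℙ)
    (k : ℕ) (hk1 : 1 ≤ k) (hk2 : k ≤ min m n) :
    (ℙ {ω | ∃ S : Finset (Fin n), S.card = k ∧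
        ¬ LinearIndependent ℝ
          (fun j : S => fun i : Fin m => c i (j : Fin n) + d i j * ε i j ω)}).toReal
      ≤ (n.choose k : ℝ) * p₀ ^ (m - k + 1) / (1 - p₀) :=
  strong_column_rank_bound_general p₀ hp₀ m n Ω c d hd ε p hmeas hp hber hindep k hk2
end

section
/- Let μ be a Borel probability measure on ℝ, let x_- ∈ ℝ, set p_- = μ((-∞, x_-)), and assume 0 < p_- < 1. Let G(t) = inf{u ∈ ℝ : F(u) ≥ t} where F(u) = μ((-∞, u]). Then for every t ∈ (0,1), one has G(p_- · t) < x_- ≤ G(p_- + (1 - p_-)·t); in particular G(p_- + (1 - p_-)·t) − G(p_- · t) > 0 for all t ∈ (0,1). -/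
/-!
`p₋ = μ((-∞, x₋))` is the left limit of `F` at `x₋`: so `F ≤ p₋` on `(-∞, x₋)`, while every
level below `p₋` is exceeded by `F` at some point `u < x₋`. As `p₋ t < p₋ < p₋ + (1 - p₋) t`
for `t ∈ (0, 1)`, the quantile of the first level lies strictly left of `x₋`, and that of the
second cannot lie left of `x₋`.
-/

open MeasureTheory Filter Set

lemma bddBelow_setOf_le_of_eventually_lt {α β : Type*} [LinearOrder α] [Nonempty α] [Preorder β]
    {f : α → β} {c : β} (hf : ∀ᶠ u in atBot, f u < c) : BddBelow {u | c ≤ f u} := by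
  obtain ⟨a, ha⟩ := eventually_atBot.1 hf
  exact ⟨a, fun u hu => le_of_not_ge fun hua => (ha u hua).not_ge hu⟩

namespace ProbabilityTheory

/-- For `t ≤ 0` or `1 < t` the set is unbounded below or empty, and `sInf` returns the junk
value `0`. -/
noncomputable def quantile (μ : Measure ℝ) (t : ℝ) : ℝ := sInf {u | t ≤ cdf μ u}

lemma bddBelow_setOf_le_cdf (μ : Measure ℝ) {t : ℝ} (ht : 0 < t) : BddBelow {u | t ≤ cdf μ u} :=
  bddBelow_setOf_le_of_eventually_lt ((tendsto_cdf_atBot μ).eventually (eventually_lt_nhds ht))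

variable (μ : Measure ℝ) [IsProbabilityMeasure μ]

lemma measureReal_Iio_eq_leftLim_cdf (x : ℝ) :
    μ.real (Iio x) = Function.leftLim (cdf μ) x := by
  have h := (cdf μ).measure_Iio (tendsto_cdf_atBot μ) x
  rw [measure_cdf, sub_zero] at h
  rw [measureReal_def, h, ENNReal.toReal_ofReal]
  exact (cdf_nonneg μ (x - 1)).trans ((monotone_cdf μ).le_leftLim (sub_one_lt x))

lemma exists_lt_lt_cdf_of_lt_measureReal_Iio {c x : ℝ} (hc : c < μ.real (Iio x)) :
    ∃ u < x, c < cdf μ u := by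
  rw [measureReal_Iio_eq_leftLim_cdf] at hc
  have hlim := (monotone_cdf μ).tendsto_leftLim x
  exact ((hlim.eventually (eventually_gt_nhds hc)).and self_mem_nhdsWithin).exists.imp
    fun _ hu => ⟨hu.2, hu.1⟩

lemma cdf_le_measureReal_Iio {u x : ℝ} (hux : u < x) : cdf μ u ≤ μ.real (Iio x) := by
  rw [cdf_eq_real]
  exact measureReal_mono (Iic_subset_Iio.2 hux)

lemma quantile_lt_of_lt_measureReal_Iio {t x : ℝ} (ht : 0 < t) (htx : t < μ.real (Iio x)) :
    quantile μ t < x := by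
  obtain ⟨u, hux, htu⟩ := exists_lt_lt_cdf_of_lt_measureReal_Iio μ htx
  exact (csInf_le (bddBelow_setOf_le_cdf μ ht) htu.le).trans_lt hux

lemma le_quantile_of_measureReal_Iio_lt {t x : ℝ} (hxt : μ.real (Iio x) < t) (ht : t < 1) :
    x ≤ quantile μ t := by
  have hne : {u | t ≤ cdf μ u}.Nonempty :=
    ((tendsto_cdf_atTop μ).eventually (eventually_gt_nhds ht)).exists.imp fun _ hu => hu.le
  refine le_csInf hne fun u (htu : t ≤ cdf μ u) => le_of_not_gt fun hux => ?_
  linarith [cdf_le_measureReal_Iio μ hux]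

end ProbabilityTheory

open ProbabilityTheory

/-- **Strict separation of the two branches of the Bernoulli decomposition.**
If `p₋ = μ((-∞, x₋)) ∈ (0,1)`, then for every `t ∈ (0,1)` one has
`G(p₋ t) < x₋ ≤ G(p₋ + (1 - p₋) t)`; in particular
`G(p₋ + (1 - p₋) t) - G(p₋ t) > 0`. -/
theorem quantile_strict_separation (μ : Measure ℝ) [IsProbabilityMeasure μ]
    (F : ℝ → ℝ) (hF : ∀ u, F u = (μ (Set.Iic u)).toReal)
    (G : ℝ → ℝ) (hG : ∀ t, G t = sInf {u : ℝ | t ≤ F u})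
    (xm : ℝ) (pm : ℝ) (hpm : pm = (μ (Set.Iio xm)).toReal)
    (hpm_mem : pm ∈ Set.Ioo (0 : ℝ) 1) :
    ∀ t ∈ Set.Ioo (0 : ℝ) 1,
      (G (pm * t) < xm ∧ xm ≤ G (pm + (1 - pm) * t)) ∧
      0 < G (pm + (1 - pm) * t) - G (pm * t) := by
  obtain ⟨hpm0, hpm1⟩ := hpm_mem
  rintro t ⟨ht0, ht1⟩
  have hFcdf : F = cdf μ := funext fun u => by rw [hF, cdf_eq_real, measureReal_def]
  have hGq : G = quantile μ := funext fun s => by rw [hG, hFcdf, quantile]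
  rw [← measureReal_def] at hpm
  subst hGq hpm
  have hlow : quantile μ (μ.real (Iio xm) * t) < xm :=
    quantile_lt_of_lt_measureReal_Iio μ (by positivity) (mul_lt_of_lt_one_right hpm0 ht1)
  have hup : xm ≤ quantile μ (μ.real (Iio xm) + (1 - μ.real (Iio xm)) * t) :=
    le_quantile_of_measureReal_Iio_lt μ (by nlinarith) (by nlinarith)
  exact ⟨⟨hlow, hup⟩, by linarith⟩
end
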